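/- Fix an integer d ≥ 1 and a constant c > 0, and let c_d : {1,2,3,…} → ℕ satisfy c_d(i) ≤ c·(i+1)(i+2)⋯(i+d−1) for all i ≥ 1 (for d = 1 the empty product equals 1, i.e. c_d(i) ≤ c). Then there exists a constant β_d > 0 (depending only on c and d, e.g. β_d = ((d+1)/d)(c·d!·p_d·ζ(d+1))^{1/(d+1)} with p_d = sup_{x>0} x^{d+1}e^{−x}/(1−e^{−x})^{d+1}) such that for all positive integers N and D, the number P(N,D,d) of multisets consisting of at most N letters with total degree at most D satisfies P(N,D,d) ≤ D · exp(β_d · D^{d/(d+1)}). In particular the bound is independent of N. -/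

import Mathlib

open scoped BigOperators

/-- The alphabet with exactly `c_d i` distinct letters of each degree `i ≥ 1`. -/
def Letter (c_d : ℕ → ℕ) : Type := Σ i : {i : ℕ // 0 < i}, Fin (c_d i.1)

/-- Total degree of a multiset of letters. -/
def msetDegree {c_d : ℕ → ℕ} (m : Letter c_d →₀ ℕ) : ℕ :=
  m.sum fun ℓ k => k * ℓ.1.1

/-- Size (number of letters, counted with multiplicity) of a multiset of letters. -/
def msetSize {c_d : ℕ → ℕ} (m : Letter c_d →₀ ℕ) : ℕ :=
  m.sum fun _ k => k

/-- `paramCount c_d N D` = number of multisets of at most `N` letters with total degree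
at most `D`. -/
noncomputable def paramCount (c_d : ℕ → ℕ) (N D : ℕ) : ℕ :=
  Nat.card {m : Letter c_d →₀ ℕ // msetSize m ≤ N ∧ msetDegree m ≤ D}

/-!
Rankin's trick. A multiset of total degree at most `D` uses only letters of degree at most `D`,
each at most `D` times, and satisfies `1 ≤ exp (t (D - deg m))` for every `t > 0`; summing this
weight over all such multiplicity vectors factorises, so
`P(N, D, d) ≤ exp (t D) ∏_{i ≤ D} (1 - e^{-ti})^{-c_d(i)}`.
Expanding `-log (1 - e^{-ti}) = ∑_k e^{-tki} / k` and using `c_d(i) ≤ c d^{d-1} i^{d-1}`, the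
logarithm of the product is at most `K t^{-d}` with `K` proportional to `ζ(d+1)`.
Taking `t = D^{-1/(d+1)}` makes both exponents equal to `D^{d/(d+1)}`.
-/

open Nat Real Finset

section Analysis

lemma exp_neg_div_one_sub_exp_neg_le {u : ℝ} (hu : 0 < u) :
    exp (-u) / (1 - exp (-u)) ≤ u⁻¹ := by
  have hexp : exp (-u) < 1 := exp_lt_one_iff.mpr (neg_lt_zero.mpr hu)
  have key : (u + 1) * exp (-u) ≤ 1 :=
    calc (u + 1) * exp (-u) ≤ exp u * exp (-u) :=
          mul_le_mul_of_nonneg_right (add_one_le_exp u) (exp_pos _).le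
      _ = 1 := by rw [← exp_add, add_neg_cancel, exp_zero]
  rw [div_le_iff₀ (sub_pos.mpr hexp), inv_mul_eq_div, le_div_iff₀ hu]
  linarith

lemma sum_Icc_pow_mul_exp_neg_le (m n : ℕ) {s : ℝ} (hs : 0 < s) :
    ∑ i ∈ Icc 1 n, (i : ℝ) ^ m * exp (-(s * i)) ≤ m ! * (2 / s) ^ (m + 1) := by
  set r := exp (-(s / 2))
  -- `x ^ m ≤ m! e^x` at `x = s i / 2` trades the polynomial factor for half of the decay.
  have hterm : ∀ i : ℕ, (i : ℝ) ^ m * exp (-(s * i)) ≤ m ! * (2 / s) ^ m * r ^ i := by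
    intro i
    have hpow : (s * i / 2) ^ m ≤ m ! * exp (s * i / 2) := by
      rw [← div_le_iff₀' (by positivity)]
      exact pow_div_factorial_le_exp _ (by positivity) m
    have hr : exp (s * i / 2) * exp (-(s * i)) = r ^ i := by
      rw [← exp_add, ← exp_nat_mul]; ring_nf
    calc (i : ℝ) ^ m * exp (-(s * i)) = (2 / s) ^ m * (s * i / 2) ^ m * exp (-(s * i)) := by
          rw [← mul_pow]; field_simp
      _ ≤ (2 / s) ^ m * (m ! * exp (s * i / 2)) * exp (-(s * i)) := by gcongr
      _ = m ! * (2 / s) ^ m * r ^ i := by rw [← hr]; ring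
  have hr1 : r < 1 := exp_lt_one_iff.mpr (by linarith)
  calc ∑ i ∈ Icc 1 n, (i : ℝ) ^ m * exp (-(s * i))
      ≤ ∑ i ∈ Ico 1 (n + 1), m ! * (2 / s) ^ m * r ^ i := by
        rw [Ico_add_one_right_eq_Icc]; exact sum_le_sum fun i _ => hterm i
    _ = m ! * (2 / s) ^ m * ∑ i ∈ Ico 1 (n + 1), r ^ i := by rw [mul_sum]
    _ ≤ m ! * (2 / s) ^ m * (r ^ 1 / (1 - r)) := by
        gcongr; exact geom_sum_Ico_le_of_lt_one (exp_pos _).le hr1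
    _ ≤ m ! * (2 / s) ^ m * (s / 2)⁻¹ := by
        gcongr; rw [pow_one]; exact exp_neg_div_one_sub_exp_neg_le (by positivity)
    _ = m ! * (2 / s) ^ (m + 1) := by rw [inv_div, pow_succ]; ring

lemma hasSum_neg_log_one_sub_exp_neg {u : ℝ} (hu : 0 < u) :
    HasSum (fun k : ℕ => exp (-((k + 1) * u)) / (k + 1)) (-log (1 - exp (-u))) := by
  have habs : |exp (-u)| < 1 := by
    rw [abs_of_pos (exp_pos _)]; exact exp_lt_one_iff.mpr (neg_lt_zero.mpr hu)
  convert Real.hasSum_pow_div_log_of_abs_lt_one habs using 2 with k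
  rw [← exp_nat_mul]; push_cast; ring_nf

lemma summable_one_div_succ_pow {p : ℕ} (hp : 1 < p) :
    Summable fun k : ℕ => 1 / ((k : ℝ) + 1) ^ p := by
  have := (summable_nat_add_iff 1).mpr (Real.summable_one_div_nat_pow.mpr hp)
  simpa only [Nat.cast_add, Nat.cast_one] using this

lemma sum_mul_neg_log_one_sub_exp_neg_le {a : ℕ → ℝ} {C : ℝ} {m : ℕ} (hC : 0 ≤ C)
    (ha : ∀ i, 1 ≤ i → a i ≤ C * (i : ℝ) ^ m) {t : ℝ} (ht : 0 < t) (n : ℕ) :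
    ∑ i ∈ Icc 1 n, a i * -log (1 - exp (-(t * i)))
      ≤ C * m ! * 2 ^ (m + 1) * (∑' k : ℕ, 1 / ((k : ℝ) + 1) ^ (m + 2)) / t ^ (m + 1) := by
  have hlog : ∀ i ∈ Icc 1 n, HasSum (fun k : ℕ => C * (i : ℝ) ^ m *
      (exp (-((k + 1) * (t * i))) / (k + 1))) (C * (i : ℝ) ^ m * -log (1 - exp (-(t * i)))) :=
    fun i hi => (hasSum_neg_log_one_sub_exp_neg
      (mul_pos ht (Nat.cast_pos.mpr (mem_Icc.mp hi).1))).mul_left _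
  have hterm : ∀ k : ℕ, ∑ i ∈ Icc 1 n, C * (i : ℝ) ^ m * (exp (-((k + 1) * (t * i))) / (k + 1))
      ≤ C * m ! * (2 / t) ^ (m + 1) * (1 / ((k : ℝ) + 1) ^ (m + 2)) := by
    intro k
    have hk : (0 : ℝ) < k + 1 := by positivity
    calc ∑ i ∈ Icc 1 n, C * (i : ℝ) ^ m * (exp (-((k + 1) * (t * i))) / (k + 1))
        = C / (k + 1) * ∑ i ∈ Icc 1 n, (i : ℝ) ^ m * exp (-((t * (k + 1)) * i)) := by
          rw [mul_sum]; refine sum_congr rfl fun i _ => ?_; ring_nf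
      _ ≤ C / (k + 1) * (m ! * (2 / (t * (k + 1))) ^ (m + 1)) := by
          gcongr; exact sum_Icc_pow_mul_exp_neg_le m n (by positivity)
      _ = C * m ! * (2 / t) ^ (m + 1) * (1 / ((k : ℝ) + 1) ^ (m + 2)) := by
          rw [div_pow, div_pow, mul_pow]; field_simp; ring
  calc ∑ i ∈ Icc 1 n, a i * -log (1 - exp (-(t * i)))
      ≤ ∑ i ∈ Icc 1 n, C * (i : ℝ) ^ m * -log (1 - exp (-(t * i))) := by
        refine sum_le_sum fun i hi => mul_le_mul_of_nonneg_right (ha i (mem_Icc.mp hi).1) ?_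
        exact (hasSum_neg_log_one_sub_exp_neg
          (mul_pos ht (Nat.cast_pos.mpr (mem_Icc.mp hi).1))).nonneg fun k => by positivity
    _ ≤ C * m ! * (2 / t) ^ (m + 1) * ∑' k : ℕ, 1 / ((k : ℝ) + 1) ^ (m + 2) :=
        hasSum_le hterm (hasSum_sum hlog)
          ((summable_one_div_succ_pow (by omega)).hasSum.mul_left _)
    _ = C * m ! * 2 ^ (m + 1) * (∑' k : ℕ, 1 / ((k : ℝ) + 1) ^ (m + 2)) / t ^ (m + 1) := by
        rw [div_pow]; ring

lemma prod_Ico_add_le_pow {i : ℕ} (hi : 1 ≤ i) (m : ℕ) :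
    ∏ j ∈ Ico 1 (m + 1), ((i : ℝ) + j) ≤ ((m : ℝ) + 1) ^ m * (i : ℝ) ^ m := by
  have hi' : (1 : ℝ) ≤ i := Nat.one_le_cast.mpr hi
  calc ∏ j ∈ Ico 1 (m + 1), ((i : ℝ) + j) ≤ ∏ _j ∈ Ico 1 (m + 1), (((m : ℝ) + 1) * i) := by
        refine prod_le_prod (fun _ _ => by positivity) fun j hj => ?_
        have hjm : (j : ℝ) ≤ m := by exact_mod_cast Nat.lt_succ_iff.mp (mem_Ico.mp hj).2
        nlinarith
    _ = ((m : ℝ) + 1) ^ m * (i : ℝ) ^ m := by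
        rw [prod_const, Nat.card_Ico, Nat.add_sub_cancel, mul_pow]

lemma rpow_neg_inv_add_one_mul_self {x : ℝ} (hx : 0 < x) {d : ℝ} (hd : d + 1 ≠ 0) :
    x ^ (-(d + 1)⁻¹) * x = x ^ (d / (d + 1)) := by
  rw [← rpow_add_one hx.ne']
  congr 1
  field_simp
  ring

lemma inv_rpow_neg_inv_add_one_pow {x : ℝ} (hx : 0 < x) (n : ℕ) :
    ((x ^ (-((n : ℝ) + 1)⁻¹)) ^ n)⁻¹ = x ^ ((n : ℝ) / (n + 1)) := by
  rw [← rpow_natCast, ← rpow_mul hx.le, ← rpow_neg hx.le]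
  congr 1
  ring

end Analysis

section Rankin

lemma card_filter_sum_mul_le_le_exp_mul_prod {ι : Type*} [Fintype ι] [DecidableEq ι] (w : ι → ℕ)
    (hw : ∀ x, 0 < w x) (n D : ℕ) {t : ℝ} (ht : 0 < t) :
    (((Fintype.piFinset fun _ : ι => range n).filter fun f => ∑ x, f x * w x ≤ D).card : ℝ)
      ≤ exp (t * D) * ∏ x, (1 - exp (-(t * w x)))⁻¹ := by
  set S := Fintype.piFinset fun _ : ι => range n
  have hweight : ∀ f : ι → ℕ,
      exp (t * (D - ∑ x, f x * w x)) = exp (t * D) * ∏ x, exp (-(t * w x)) ^ f x := by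
    intro f
    have hprod : ∏ x, exp (-(t * w x)) ^ f x = exp (-(t * ∑ x, f x * w x)) := by
      push_cast
      rw [mul_sum, ← sum_neg_distrib, exp_sum]
      exact prod_congr rfl fun x _ => by rw [← exp_nat_mul]; ring_nf
    rw [hprod, ← exp_add]; ring_nf
  calc ((S.filter fun f => ∑ x, f x * w x ≤ D).card : ℝ)
      ≤ ∑ f ∈ S.filter fun f => ∑ x, f x * w x ≤ D, exp (t * (D - ∑ x, f x * w x)) := by
        rw [card_eq_sum_ones, Nat.cast_sum, Nat.cast_one]
        refine sum_le_sum fun f hf => one_le_exp (mul_nonneg ht.le (sub_nonneg.mpr ?_))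
        exact_mod_cast (mem_filter.mp hf).2
    _ ≤ ∑ f ∈ S, exp (t * (D - ∑ x, f x * w x)) :=
        sum_le_sum_of_subset_of_nonneg (filter_subset _ _) fun _ _ _ => (exp_pos _).le
    _ = exp (t * D) * ∏ x, ∑ k ∈ range n, exp (-(t * w x)) ^ k := by
        rw [prod_univ_sum, mul_sum]; exact sum_congr rfl fun f _ => hweight f
    _ ≤ exp (t * D) * ∏ x, (1 - exp (-(t * w x)))⁻¹ := by
        gcongr with x
        have hr : exp (-(t * w x)) < 1 :=
          exp_lt_one_iff.mpr (neg_lt_zero.mpr (mul_pos ht (Nat.cast_pos.mpr (hw x))))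
        rw [range_eq_Ico, inv_eq_one_div, ← pow_zero (exp (-(t * w x)))]
        exact geom_sum_Ico_le_of_lt_one (exp_pos _).le hr

end Rankin

section Letters

variable {c_d : ℕ → ℕ} {D : ℕ}

abbrev BoundedLetter (c_d : ℕ → ℕ) (D : ℕ) : Type := Σ i : Icc 1 D, Fin (c_d i)

def BoundedLetter.toLetter (x : BoundedLetter c_d D) : Letter c_d :=
  ⟨⟨x.1, (mem_Icc.mp x.1.2).1⟩, x.2⟩

lemma BoundedLetter.toLetter_injective :
    Function.Injective (BoundedLetter.toLetter (c_d := c_d) (D := D)) := by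
  rintro ⟨⟨i, hi⟩, a⟩ ⟨⟨j, hj⟩, b⟩ h
  obtain ⟨hij, hab⟩ := Sigma.mk.inj_iff.mp h
  obtain rfl : i = j := congrArg Subtype.val hij
  obtain rfl := eq_of_heq hab
  rfl

lemma BoundedLetter.exists_toLetter_eq {ℓ : Letter c_d} (h : ℓ.1.1 ≤ D) :
    ∃ x : BoundedLetter c_d D, x.toLetter = ℓ :=
  ⟨⟨⟨ℓ.1.1, mem_Icc.mpr ⟨ℓ.1.2, h⟩⟩, ℓ.2⟩, rfl⟩

lemma mul_degree_le_msetDegree (m : Letter c_d →₀ ℕ) (ℓ : Letter c_d) :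
    m ℓ * ℓ.1.1 ≤ msetDegree m := by
  by_cases h : m ℓ = 0
  · simp [h]
  · exact single_le_sum (f := fun ℓ => m ℓ * ℓ.1.1) (fun _ _ => Nat.zero_le _)
      (Finsupp.mem_support_iff.mpr h)

lemma eq_zero_of_msetDegree_lt {m : Letter c_d →₀ ℕ} {ℓ : Letter c_d}
    (h : msetDegree m < ℓ.1.1) : m ℓ = 0 := by
  by_contra hm
  have := mul_degree_le_msetDegree m ℓ
  have := Nat.le_mul_of_pos_left ℓ.1.1 (Nat.pos_of_ne_zero hm)
  omega

lemma sum_toLetter_le_msetDegree (m : Letter c_d →₀ ℕ) :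
    ∑ x : BoundedLetter c_d D, m x.toLetter * x.1.1 ≤ msetDegree m := by
  classical
  set L := univ.image (BoundedLetter.toLetter (c_d := c_d) (D := D))
  calc ∑ x : BoundedLetter c_d D, m x.toLetter * x.1.1
      = ∑ ℓ ∈ L, m ℓ * ℓ.1.1 :=
        (sum_image (f := fun ℓ : Letter c_d => m ℓ * ℓ.1.1)
          fun _ _ _ _ h => BoundedLetter.toLetter_injective h).symm
    _ ≤ ∑ ℓ ∈ L ∪ m.support, m ℓ * ℓ.1.1 :=
        sum_le_sum_of_subset_of_nonneg subset_union_left fun _ _ _ => Nat.zero_le _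
    _ = msetDegree m :=
        (Finsupp.sum_of_support_subset m subset_union_right (fun ℓ k => k * ℓ.1.1)
          fun _ _ => zero_mul _).symm

lemma paramCount_le_card (c_d : ℕ → ℕ) (N D : ℕ) :
    paramCount c_d N D ≤ ((Fintype.piFinset fun _ : BoundedLetter c_d D => range (D + 1)).filter
      fun f => ∑ x, f x * x.1.1 ≤ D).card := by
  rw [paramCount, ← Nat.card_eq_finsetCard]
  refine Nat.card_le_card_of_injective (fun m => ⟨fun x => m.1 x.toLetter, ?_⟩) ?_
  · obtain ⟨m, -, hm⟩ := m
    dsimp only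
    refine mem_filter.mpr ⟨Fintype.mem_piFinset.mpr fun x => ?_,
      (sum_toLetter_le_msetDegree m).trans hm⟩
    have := mul_degree_le_msetDegree m x.toLetter
    have := Nat.le_mul_of_pos_right (m x.toLetter) x.toLetter.1.2
    exact mem_range.mpr (by omega)
  · intro m₁ m₂ h
    refine Subtype.ext (Finsupp.ext fun ℓ => ?_)
    by_cases hℓ : ℓ.1.1 ≤ D
    · obtain ⟨x, rfl⟩ := BoundedLetter.exists_toLetter_eq hℓ
      exact congrFun (congrArg Subtype.val h) x
    · have h₁ := m₁.2.2
      have h₂ := m₂.2.2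
      rw [eq_zero_of_msetDegree_lt (m := m₁.1) (by omega),
        eq_zero_of_msetDegree_lt (m := m₂.1) (by omega)]

lemma BoundedLetter.prod_eq_prod_pow {M : Type*} [CommMonoid M] (g : ℕ → M) :
    ∏ x : BoundedLetter c_d D, g x.1.1 = ∏ i ∈ Icc 1 D, g i ^ c_d i := by
  rw [Fintype.prod_sigma, ← prod_coe_sort (Icc 1 D)]
  simp only [prod_const, Finset.card_fin]

theorem paramCount_le_exp_add (c_d : ℕ → ℕ) (N D : ℕ) {t : ℝ} (ht : 0 < t) :
    (paramCount c_d N D : ℝ)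
      ≤ exp (t * D + ∑ i ∈ Icc 1 D, c_d i * -log (1 - exp (-(t * i)))) := by
  have hfactor : ∀ i ∈ Icc 1 D,
      exp (c_d i * -log (1 - exp (-(t * i)))) = (1 - exp (-(t * i)))⁻¹ ^ c_d i := by
    intro i hi
    have : exp (-(t * i)) < 1 :=
      exp_lt_one_iff.mpr (neg_lt_zero.mpr (mul_pos ht (Nat.cast_pos.mpr (mem_Icc.mp hi).1)))
    rw [exp_nat_mul, ← log_inv, exp_log (inv_pos.mpr (sub_pos.mpr this))]
  calc (paramCount c_d N D : ℝ)
      ≤ exp (t * D) * ∏ x : BoundedLetter c_d D, (1 - exp (-(t * x.1.1)))⁻¹ :=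
        (Nat.cast_le.mpr (paramCount_le_card c_d N D)).trans
          (card_filter_sum_mul_le_le_exp_mul_prod _ (fun x => (mem_Icc.mp x.1.2).1) _ _ ht)
    _ = exp (t * D + ∑ i ∈ Icc 1 D, c_d i * -log (1 - exp (-(t * i)))) := by
        rw [BoundedLetter.prod_eq_prod_pow (fun i : ℕ => (1 - exp (-(t * i)))⁻¹), exp_add, exp_sum,
          prod_congr rfl hfactor]

end Letters

/-- there is `β_d > 0` depending only on `c` and `d` such that for every
alphabet with `c_d(i) ≤ c (i+1)⋯(i+d−1)` letters of degree `i`, and all `N, D ≥ 1`,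
`P(N,D,d) ≤ D exp(β_d D^{d/(d+1)})`; in particular the bound is independent of `N`. -/
theorem paramCount_le_exp
    (d : ℕ) (hd : 1 ≤ d) (c : ℝ) (hc : 0 < c) :
    ∃ β : ℝ, 0 < β ∧
      ∀ c_d : ℕ → ℕ,
        (∀ i : ℕ, 1 ≤ i → (c_d i : ℝ) ≤ c * ∏ j ∈ Finset.Ico 1 d, ((i : ℝ) + j)) →
        ∀ N D : ℕ, 0 < N → 0 < D →
          (paramCount c_d N D : ℝ)
            ≤ (D : ℝ) * Real.exp (β * (D : ℝ) ^ ((d : ℝ) / (d + 1))) := by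
  obtain ⟨m, rfl⟩ : ∃ m, d = m + 1 := ⟨d - 1, by omega⟩
  set K := c * ((m : ℝ) + 1) ^ m * m ! * 2 ^ (m + 1) * ∑' k : ℕ, 1 / ((k : ℝ) + 1) ^ (m + 2)
  refine ⟨1 + K, by positivity, fun c_d hcd N D _ hD => ?_⟩
  have hD' : (0 : ℝ) < D := Nat.cast_pos.mpr hD
  set t := (D : ℝ) ^ (-(((m + 1 : ℕ) : ℝ) + 1)⁻¹) with ht_def
  have ht : 0 < t := rpow_pos_of_pos hD' _
  have hlog : ∑ i ∈ Icc 1 D, (c_d i : ℝ) * -log (1 - exp (-(t * i))) ≤ K / t ^ (m + 1) :=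
    sum_mul_neg_log_one_sub_exp_neg_le (by positivity) (fun i hi => (hcd i hi).trans <| by
      rw [mul_assoc]; gcongr; exact prod_Ico_add_le_pow hi m) ht D
  calc (paramCount c_d N D : ℝ)
      ≤ exp (t * D + ∑ i ∈ Icc 1 D, c_d i * -log (1 - exp (-(t * i)))) :=
        paramCount_le_exp_add c_d N D ht
    _ ≤ exp (t * D + K / t ^ (m + 1)) := by gcongr
    _ = exp ((1 + K) * (D : ℝ) ^ (((m + 1 : ℕ) : ℝ) / ((m + 1 : ℕ) + 1))) := by
        rw [div_eq_mul_inv, ht_def, rpow_neg_inv_add_one_mul_self hD' (by positivity),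
          inv_rpow_neg_inv_add_one_pow hD']
        congr 1
        ring
    _ ≤ D * exp ((1 + K) * (D : ℝ) ^ (((m + 1 : ℕ) : ℝ) / ((m + 1 : ℕ) + 1))) :=
        le_mul_of_one_le_left (exp_pos _).le (Nat.one_le_cast.mpr hD)
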